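/- arXiv:2602.02317 — 5 statements merged into one kernel-verified Lean document; each statement's English description precedes it below -/
import Mathlib

section
/- Let Ω be a set, X a nonempty compact metric space, I a countable index set, θ_i : Ω → Ω arbitrary maps, p_i : Ω → [0,∞) weight functions with ∑_{i∈I} p_i(ω) = 1 for every ω ∈ Ω, and suppose that for some λ with 0 ≤ λ < 1 every fibre map g_ω : X → X (ω ∈ Ω) is Lipschitz with constant λ. Let K be the associated sectional transfer operator. Then for all sections μ, ν : Ω → M₁(X) and every D ≥ 0: if W₁(ν_θ, μ_θ) ≤ D for every θ ∈ Ω, then W₁((Kν)_ω, (Kμ)_ω) ≤ λ·D for every ω ∈ Ω. In particular, K is a λ-contraction for the supremum Wasserstein-1 metric on sections. -/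
/-!
Testing against a 1-Lipschitz `φ`, the integral of `φ` against `(Kν)_ω` is the `p(ω)`-weighted
sum of the integrals of `φ ∘ g_ϑ` against `ν_ϑ`, with `ϑ = θ_i(ω)`. Since `φ ∘ g_ϑ` is
`λ`-Lipschitz, each difference of such integrals is at most `λ W₁(ν_ϑ, μ_ϑ) ≤ λ D`, and the
weights sum to `1`.
-/

open MeasureTheory

/-- The Wasserstein-1 distance between two Borel (probability) measures on a metric
space `X`, defined via Kantorovich–Rubinstein duality. -/
noncomputable def W1 {X : Type*} [MetricSpace X] [MeasurableSpace X]
    (μ ν : Measure X) : ℝ :=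
  ⨆ φ : {φ : X → ℝ // LipschitzWith 1 φ}, (∫ x, φ.1 x ∂μ) - ∫ x, φ.1 x ∂ν

/-- The sectional transfer operator (full-branch form) applied to a section
`ν : Ω → M₁(X)`: `(Kν)_ω = ∑_{i∈I} p_i(ω) · (g_{θ_i(ω)})_* ν_{θ_i(ω)}`. -/
noncomputable def sectionalTransfer {Ω X I : Type*} [MeasurableSpace X]
    (θ : I → Ω → Ω) (p : I → Ω → ℝ) (g : Ω → X → X)
    (ν : Ω → Measure X) (ω : Ω) : Measure X :=
  Measure.sum fun i => ENNReal.ofReal (p i ω) • ((ν (θ i ω)).map (g (θ i ω)))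

open scoped NNReal

lemma summable_of_tsum_ne_zero {ι α : Type*} [AddCommMonoid α] [TopologicalSpace α] {f : ι → α}
    (h : ∑' i, f i ≠ 0) : Summable f :=
  by_contra fun hf => h (tsum_eq_zero_of_not_summable hf)

lemma isProbabilityMeasure_sum_ofReal_smul {X ι : Type*} [MeasurableSpace X] {w : ι → ℝ}
    (hw0 : ∀ i, 0 ≤ w i) (hw1 : ∑' i, w i = 1) {ρ : ι → Measure X}
    (hρ : ∀ i, IsProbabilityMeasure (ρ i)) :
    IsProbabilityMeasure (Measure.sum fun i => ENNReal.ofReal (w i) • ρ i) := by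
  constructor
  simp only [Measure.sum_apply _ MeasurableSet.univ, Measure.smul_apply, measure_univ,
    smul_eq_mul, mul_one]
  rw [← ENNReal.ofReal_tsum_of_nonneg hw0 (summable_of_tsum_ne_zero (by simp [hw1])), hw1,
    ENNReal.ofReal_one]

lemma W1_le {X : Type*} [MetricSpace X] [MeasurableSpace X] {ρ σ : Measure X} {c : ℝ}
    (h : ∀ φ : X → ℝ, LipschitzWith 1 φ → ∫ x, φ x ∂ρ - ∫ x, φ x ∂σ ≤ c) : W1 ρ σ ≤ c :=
  haveI : Nonempty {φ : X → ℝ // LipschitzWith 1 φ} :=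
    ⟨⟨fun _ => 0, (LipschitzWith.const 0).weaken zero_le_one⟩⟩
  ciSup_le fun φ => h φ.1 φ.2

section CompactSpace

variable {X : Type*} [MetricSpace X] [CompactSpace X] [MeasurableSpace X] [BorelSpace X]
  {ρ σ : Measure X}

lemma LipschitzWith.integrable_of_compactSpace [IsFiniteMeasure ρ] {K : ℝ≥0} {φ : X → ℝ}
    (hφ : LipschitzWith K φ) : Integrable φ ρ :=
  hφ.continuous.integrable_of_hasCompactSupport (.of_compactSpace φ)

-- The `⨆` defining `W1` is a junk value unless its range is bounded above; this is the bound.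
lemma LipschitzWith.integral_sub_integral_le_two_mul_diam [IsProbabilityMeasure ρ]
    [IsProbabilityMeasure σ] {φ : X → ℝ} (hφ : LipschitzWith 1 φ) :
    ∫ x, φ x ∂ρ - ∫ x, φ x ∂σ ≤ 2 * Metric.diam (Set.univ : Set X) := by
  obtain ⟨x₀⟩ := nonempty_of_isProbabilityMeasure ρ
  set d := Metric.diam (Set.univ : Set X)
  have hdist (x : X) : |φ x - φ x₀| ≤ d :=
    calc |φ x - φ x₀| ≤ dist x x₀ := by simpa [Real.dist_eq] using hφ.dist_le_mul x x₀
      _ ≤ d := Metric.dist_le_diam_of_mem isCompact_univ.isBounded trivial trivial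
  have hρ : ∫ x, φ x ∂ρ ≤ φ x₀ + d :=
    calc ∫ x, φ x ∂ρ ≤ ∫ _, (φ x₀ + d) ∂ρ :=
          integral_mono hφ.integrable_of_compactSpace (integrable_const _)
            fun x => by linarith [(abs_le.1 (hdist x)).2]
      _ = φ x₀ + d := by simp
  have hσ : φ x₀ - d ≤ ∫ x, φ x ∂σ :=
    calc φ x₀ - d = ∫ _, (φ x₀ - d) ∂σ := by simp
      _ ≤ ∫ x, φ x ∂σ :=
          integral_mono (integrable_const _) hφ.integrable_of_compactSpace
            fun x => by linarith [(abs_le.1 (hdist x)).1]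
  linarith

lemma LipschitzWith.integral_sub_integral_le_W1 [IsProbabilityMeasure ρ] [IsProbabilityMeasure σ]
    {φ : X → ℝ} (hφ : LipschitzWith 1 φ) : ∫ x, φ x ∂ρ - ∫ x, φ x ∂σ ≤ W1 ρ σ :=
  le_ciSup (f := fun φ : {φ : X → ℝ // LipschitzWith 1 φ} => ∫ x, φ.1 x ∂ρ - ∫ x, φ.1 x ∂σ)
    ⟨2 * Metric.diam (Set.univ : Set X), by
      rintro _ ⟨ψ, rfl⟩
      exact ψ.2.integral_sub_integral_le_two_mul_diam⟩ ⟨φ, hφ⟩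

lemma LipschitzWith.integral_sub_integral_le_mul_W1 [IsProbabilityMeasure ρ]
    [IsProbabilityMeasure σ] {K : ℝ≥0} {ψ : X → ℝ} (hψ : LipschitzWith K ψ) :
    ∫ x, ψ x ∂ρ - ∫ x, ψ x ∂σ ≤ K * W1 ρ σ := by
  rcases eq_or_ne K 0 with rfl | hK
  · obtain ⟨x₀⟩ := nonempty_of_isProbabilityMeasure ρ
    have hconst (x : X) : ψ x = ψ x₀ := (LipschitzWith.zero_iff ψ).1 hψ x x₀
    simp [hconst]
  · have hscaled : LipschitzWith 1 fun x => (K : ℝ)⁻¹ * ψ x := by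
      simpa [hK, Function.comp_def] using (lipschitzWith_smul ((K : ℝ)⁻¹)).comp hψ
    have h := hscaled.integral_sub_integral_le_W1 (ρ := ρ) (σ := σ)
    rw [integral_const_mul, integral_const_mul, ← mul_sub] at h
    calc ∫ x, ψ x ∂ρ - ∫ x, ψ x ∂σ = K * ((K : ℝ)⁻¹ * (∫ x, ψ x ∂ρ - ∫ x, ψ x ∂σ)) := by
          field_simp
      _ ≤ K * W1 ρ σ := by gcongr

lemma W1_map_le {Y : Type*} [MetricSpace Y] [MeasurableSpace Y] [BorelSpace Y]
    [IsProbabilityMeasure ρ] [IsProbabilityMeasure σ] {K : ℝ≥0} {f : X → Y}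
    (hf : LipschitzWith K f) : W1 (ρ.map f) (σ.map f) ≤ K * W1 ρ σ := by
  refine W1_le fun φ hφ => ?_
  rw [integral_map hf.continuous.aemeasurable hφ.continuous.aestronglyMeasurable,
    integral_map hf.continuous.aemeasurable hφ.continuous.aestronglyMeasurable]
  simpa using (hφ.comp hf).integral_sub_integral_le_mul_W1 (ρ := ρ) (σ := σ)

lemma W1_sum_ofReal_smul_le {ι : Type*} {w : ι → ℝ} (hw0 : ∀ i, 0 ≤ w i)
    (hw1 : ∑' i, w i = 1) {ρ σ : ι → Measure X} (hρ : ∀ i, IsProbabilityMeasure (ρ i))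
    (hσ : ∀ i, IsProbabilityMeasure (σ i)) {c : ℝ} (hc : ∀ i, W1 (ρ i) (σ i) ≤ c) :
    W1 (Measure.sum fun i => ENNReal.ofReal (w i) • ρ i)
      (Measure.sum fun i => ENNReal.ofReal (w i) • σ i) ≤ c := by
  refine W1_le fun φ hφ => ?_
  have hasSum_integral (τ : ι → Measure X) (hτ : ∀ i, IsProbabilityMeasure (τ i)) :
      HasSum (fun i => w i * ∫ x, φ x ∂τ i)
        (∫ x, φ x ∂Measure.sum fun i => ENNReal.ofReal (w i) • τ i) := by
    have := isProbabilityMeasure_sum_ofReal_smul hw0 hw1 hτ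
    simpa [integral_smul_measure, ENNReal.toReal_ofReal (hw0 _)] using
      hasSum_integral_measure
        (hφ.integrable_of_compactSpace (ρ := Measure.sum fun i => ENNReal.ofReal (w i) • τ i))
  have hterm (i : ι) : w i * ∫ x, φ x ∂ρ i - w i * ∫ x, φ x ∂σ i ≤ w i * c := by
    have := hρ i
    have := hσ i
    rw [← mul_sub]
    exact mul_le_mul_of_nonneg_left (hφ.integral_sub_integral_le_W1.trans (hc i)) (hw0 i)
  have hasSum_bound : HasSum (fun i => w i * c) c := by
    simpa [hw1] using (summable_of_tsum_ne_zero (f := w) (by simp [hw1])).hasSum.mul_right c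
  exact hasSum_le hterm ((hasSum_integral ρ hρ).sub (hasSum_integral σ hσ)) hasSum_bound

end CompactSpace

theorem sectionalTransfer_contraction_general
    {Ω X I : Type*} [MetricSpace X] [CompactSpace X]
    [MeasurableSpace X] [BorelSpace X]
    (θ : I → Ω → Ω) (p : I → Ω → ℝ)
    (hp0 : ∀ i ω, 0 ≤ p i ω) (hp1 : ∀ ω, ∑' i, p i ω = 1)
    (lam : ℝ) (hlam0 : 0 ≤ lam)
    (g : Ω → X → X)
    (hg : ∀ (ω : Ω) (x y : X), dist (g ω x) (g ω y) ≤ lam * dist x y)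
    (μ ν : Ω → Measure X)
    (hμ : ∀ ω, IsProbabilityMeasure (μ ω)) (hν : ∀ ω, IsProbabilityMeasure (ν ω))
    (D : ℝ)
    (hWD : ∀ ϑ : Ω, W1 (ν ϑ) (μ ϑ) ≤ D) :
    ∀ ω : Ω,
      W1 (sectionalTransfer θ p g ν ω) (sectionalTransfer θ p g μ ω) ≤ lam * D := by
  intro ω
  have hgLip (ϑ : Ω) : LipschitzWith lam.toNNReal (g ϑ) :=
    .of_dist_le_mul fun x y => by simpa [Real.coe_toNNReal lam hlam0] using hg ϑ x y
  have hmap (τ : Ω → Measure X) (hτ : ∀ ϑ, IsProbabilityMeasure (τ ϑ)) (ϑ : Ω) :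
      IsProbabilityMeasure ((τ ϑ).map (g ϑ)) :=
    have := hτ ϑ
    Measure.isProbabilityMeasure_map (hgLip ϑ).continuous.aemeasurable
  refine W1_sum_ofReal_smul_le (hp0 · ω) (hp1 ω) (fun i => hmap ν hν _) (fun i => hmap μ hμ _)
    fun i => ?_
  have := hν (θ i ω)
  have := hμ (θ i ω)
  calc W1 ((ν (θ i ω)).map (g (θ i ω))) ((μ (θ i ω)).map (g (θ i ω)))
      ≤ lam.toNNReal * W1 (ν (θ i ω)) (μ (θ i ω)) := W1_map_le (hgLip _)
    _ ≤ lam * D := by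
      rw [Real.coe_toNNReal lam hlam0]
      exact mul_le_mul_of_nonneg_left (hWD _) hlam0

/-- If every fibre map `g_ω : X → X` is Lipschitz with a uniform constant `0 ≤ λ < 1`,
then the sectional transfer operator contracts the supremum Wasserstein-1 metric on
sections by the factor `λ`: whenever `W₁(ν_θ, μ_θ) ≤ D` for all `θ ∈ Ω`, one has
`W₁((Kν)_ω, (Kμ)_ω) ≤ λ·D` for all `ω ∈ Ω`. -/
theorem sectionalTransfer_contraction
    {Ω X I : Type*} [MetricSpace X] [CompactSpace X] [Nonempty X]
    [MeasurableSpace X] [BorelSpace X] [Countable I]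
    (θ : I → Ω → Ω) (p : I → Ω → ℝ)
    (hp0 : ∀ i ω, 0 ≤ p i ω) (hp1 : ∀ ω, ∑' i, p i ω = 1)
    (lam : ℝ) (hlam0 : 0 ≤ lam) (hlam1 : lam < 1)
    (g : Ω → X → X)
    (hg : ∀ (ω : Ω) (x y : X), dist (g ω x) (g ω y) ≤ lam * dist x y)
    (μ ν : Ω → Measure X)
    (hμ : ∀ ω, IsProbabilityMeasure (μ ω)) (hν : ∀ ω, IsProbabilityMeasure (ν ω))
    (D : ℝ) (hD : 0 ≤ D)
    (hWD : ∀ ϑ : Ω, W1 (ν ϑ) (μ ϑ) ≤ D) :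
    ∀ ω : Ω,
      W1 (sectionalTransfer θ p g ν ω) (sectionalTransfer θ p g μ ω) ≤ lam * D :=
  sectionalTransfer_contraction_general θ p hp0 hp1 lam hlam0 g hg μ ν hμ hν D hWD
end

section
/- Let (Ω, η) be a probability space, X a compact metric space with its Borel σ-algebra, f : Ω → Ω measurable, I a countable index set, θ_i : Ω → Ω measurable maps with f(θ_i(ω)) = ω for all i ∈ I and ω ∈ Ω, p_i : Ω → [0,∞) measurable with ∑_{i∈I} p_i(ω) = 1 for all ω, and g : Ω × X → X measurable. Assume the reverse Markov kernel property: for every bounded measurable H : Ω → ℝ, ∫_Ω ∑_{i∈I} p_i(ω) H(θ_i(ω)) dη(ω) = ∫_Ω H dη. Let ν : Ω → M₁(X) be a Markov kernel which is a fixed point of the sectional transfer operator, i.e. for η-almost every ω, ν_ω = ∑_{i∈I} p_i(ω) · (g(θ_i(ω),·))_* ν_{θ_i(ω)}. Define the probability measure μ on Ω × X by μ = η ⊗ ν, i.e. μ(E) = ∫_Ω ν_ω({x : (ω,x) ∈ E}) dη(ω) for Borel E ⊆ Ω × X. Then μ is invariant under the skew-product map T(ω,x) = (f(ω), g(ω,x)):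 T_*μ = μ. -/
open MeasureTheory ProbabilityTheory

/-- If the Markov kernel `ν` is a fixed point of the sectional transfer operator
(η-almost everywhere), then the measure `μ = η ⊗ ν` on `Ω × X` is invariant under the
skew-product map `T(ω,x) = (f(ω), g(ω,x))`, i.e. `T_*μ = μ`. -/
theorem skewProduct_invariant_measure
    {Ω X I : Type*} [MeasurableSpace Ω] [MetricSpace X] [CompactSpace X]
    [MeasurableSpace X] [BorelSpace X] [Countable I]
    (η : Measure Ω) [IsProbabilityMeasure η]
    (f : Ω → Ω) (hf : Measurable f)
    (θ : I → Ω → Ω) (hθ : ∀ i, Measurable (θ i))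
    (hfθ : ∀ i ω, f (θ i ω) = ω)
    (p : I → Ω → ℝ) (hpm : ∀ i, Measurable (p i))
    (hp0 : ∀ i ω, 0 ≤ p i ω) (hp1 : ∀ ω, ∑' i, p i ω = 1)
    (g : Ω × X → X) (hg : Measurable g)
    (hrev : ∀ H : Ω → ℝ, Measurable H → (∃ C, ∀ ω, |H ω| ≤ C) →
      ∫ ω, (∑' i, p i ω * H (θ i ω)) ∂η = ∫ ω, H ω ∂η)
    (κ : Kernel Ω X) [IsMarkovKernel κ]
    (hfix : ∀ᵐ ω ∂η,
      κ ω = Measure.sum fun i =>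
        ENNReal.ofReal (p i ω) • ((κ (θ i ω)).map fun x => g (θ i ω, x))) :
    (η.compProd κ).map (fun q : Ω × X => (f q.1, g q)) = η.compProd κ := by
  have hT : Measurable (fun q : Ω × X => (f q.1, g q)) :=
    (hf.comp measurable_fst).prodMk hg
  ext E hE
  rw [Measure.map_apply hT hE, Measure.compProd_apply (hT hE), Measure.compProd_apply hE]
  set H : Ω → ENNReal :=
    fun ω => κ ω (Prod.mk ω ⁻¹' ((fun q : Ω × X => (f q.1, g q)) ⁻¹' E)) with hHdef
  have hHmeas : Measurable H := Kernel.measurable_kernel_prodMk_left (hT hE)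
  have hHle : ∀ ω, H ω ≤ 1 := fun ω => prob_le_one
  -- summability of p
  have hsum : ∀ ω, Summable (fun i => p i ω) := by
    intro ω
    by_contra h
    have h1 := hp1 ω
    rw [tsum_eq_zero_of_not_summable h] at h1
    exact one_ne_zero h1.symm
  -- the key pointwise (a.e.) identity
  set F : Ω → ENNReal := fun ω => ∑' i, ENNReal.ofReal (p i ω) * H (θ i ω) with hFdef
  have key : ∀ᵐ ω ∂η, κ ω (Prod.mk ω ⁻¹' E) = F ω := by
    filter_upwards [hfix] with ω hω
    rw [hω, Measure.sum_apply _ (measurable_prodMk_left hE)]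
    refine tsum_congr fun i => ?_
    rw [Measure.smul_apply,
      Measure.map_apply (show Measurable fun x => g (θ i ω, x) from
        hg.comp measurable_prodMk_left) (measurable_prodMk_left hE)]
    have hset : ((fun x => g (θ i ω, x)) ⁻¹' (Prod.mk ω ⁻¹' E))
        = Prod.mk (θ i ω) ⁻¹' ((fun q : Ω × X => (f q.1, g q)) ⁻¹' E) := by
      ext x
      simp [hfθ]
    rw [smul_eq_mul, hset]
  rw [lintegral_congr_ae key]
  -- measurability and bounds for F
  have hFmeas : Measurable F :=
    Measurable.ennreal_tsum fun i =>
      (ENNReal.measurable_ofReal.comp (hpm i)).mul (hHmeas.comp (hθ i))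
  have hFle : ∀ ω, F ω ≤ 1 := by
    intro ω
    calc F ω ≤ ∑' i, ENNReal.ofReal (p i ω) * 1 :=
          ENNReal.tsum_le_tsum fun i => mul_le_mul_right (hHle _) _
      _ = ENNReal.ofReal 1 := by
          simp only [mul_one]
          rw [← ENNReal.ofReal_tsum_of_nonneg (fun i => hp0 i ω) (hsum ω), hp1 ω]
      _ = 1 := ENNReal.ofReal_one
  have hHne : ∫⁻ ω, H ω ∂η ≠ ⊤ := by
    refine ne_top_of_le_ne_top ?_ (lintegral_mono hHle)
    simp
  have hFne : ∫⁻ ω, F ω ∂η ≠ ⊤ := by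
    refine ne_top_of_le_ne_top ?_ (lintegral_mono hFle)
    simp
  -- reduce to real integrals
  have h1 : ∫ ω, (F ω).toReal ∂η = (∫⁻ ω, F ω ∂η).toReal :=
    integral_toReal hFmeas.aemeasurable
      (ae_of_all _ fun ω => lt_of_le_of_lt (hFle ω) ENNReal.one_lt_top)
  have h2 : ∫ ω, (H ω).toReal ∂η = (∫⁻ ω, H ω ∂η).toReal :=
    integral_toReal hHmeas.aemeasurable
      (ae_of_all _ fun ω => lt_of_le_of_lt (hHle ω) ENNReal.one_lt_top)
  have h3 : ∫ ω, (F ω).toReal ∂η = ∫ ω, (H ω).toReal ∂η := by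
    have hb : ∃ C, ∀ ω, |(H ω).toReal| ≤ C := by
      refine ⟨1, fun ω => ?_⟩
      rw [abs_of_nonneg ENNReal.toReal_nonneg]
      have := ENNReal.toReal_mono ENNReal.one_ne_top (hHle ω)
      simpa using this
    have := hrev (fun ω => (H ω).toReal) hHmeas.ennreal_toReal hb
    rw [← this]
    refine integral_congr_ae (ae_of_all _ fun ω => ?_)
    have hterm : ∀ i : I, ENNReal.ofReal (p i ω) * H (θ i ω) ≠ ⊤ := by
      intro i
      exact ENNReal.mul_ne_top ENNReal.ofReal_ne_top
        (ne_top_of_le_ne_top ENNReal.one_ne_top (hHle _))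
    show (∑' i, ENNReal.ofReal (p i ω) * H (θ i ω)).toReal
      = ∑' i, p i ω * (H (θ i ω)).toReal
    rw [ENNReal.tsum_toReal_eq hterm]
    refine tsum_congr fun i => ?_
    rw [ENNReal.toReal_mul, ENNReal.toReal_ofReal (hp0 i ω)]
  have := (ENNReal.toReal_eq_toReal_iff' hFne hHne).mp (by rw [← h1, ← h2, h3])
  exact this.symm
end

section
/- Let E be a real Banach space, F ⊆ E a linear subspace, J ⊆ ℝ a set, α₀ ∈ J an accumulation point of J, and 0 ≤ λ < 1. Let (K_α)_{α∈J} be bounded linear operators on E such that: (i) ‖K_α‖ ≤ λ for all α ∈ J; (ii) K_α maps F into F for all α ∈ J; (iii) for every v ∈ F, K_α v → K_{α₀} v in E as α → α₀ in J. Let r : J → E satisfy r(α₀) = 0, r(α) ∈ F for all α ∈ J, and suppose there exists τ₀ ∈ E such that (α − α₀)⁻¹ r(α) → τ₀ in E as α → α₀ in J \ {α₀}. Let δ : J → E satisfy δ(α) = K_α δ(α) + r(α) for every α ∈ J. Then δ(α₀) = 0, and the difference quotients (α − α₀)⁻¹ δ(α) converge in E, as α → α₀ in J \ {α₀}, to (Id_E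 − K_{α₀})⁻¹ τ₀ = ∑_{n=0}^∞ K_{α₀}^n τ₀; in particular the map α ↦ δ(α) is differentiable at α₀ in E. -/
/-!
Put `q α = (α - α₀)⁻¹ • δ α`, `s α = (α - α₀)⁻¹ • r α` and let `x = ∑ K_{α₀}ⁿ τ₀` be the Neumann
series solution of `x = K_{α₀} x + τ₀`. Subtracting the two fixed-point equations gives
`(q α - x) - K_α (q α - x) = (K_α x - K_{α₀} x) + (s α - τ₀)`, and the uniform bound `‖K_α‖ ≤ λ < 1`
turns this into `(1 - λ) ‖q α - x‖ ≤ ‖K_α x - K_{α₀} x‖ + ‖s α - τ₀‖`. The last term tends to `0`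
by hypothesis. For the other one, `τ₀` and hence `x` lie in the closure of `F`, and strong
convergence of `K_α` on `F` extends to that closure because the `K_α` are equicontinuous.
-/

open Filter Topology

namespace ContinuousLinearMap

variable {𝕜 E : Type*} [NontriviallyNormedField 𝕜]

theorem one_sub_mul_norm_le_norm_sub_apply [SeminormedAddCommGroup E] [NormedSpace 𝕜 E]
    {T : E →L[𝕜] E} {c : ℝ} (hT : ‖T‖ ≤ c) (y : E) : (1 - c) * ‖y‖ ≤ ‖y - T y‖ := by
  have hTy := T.le_of_opNorm_le hT y
  have hy := norm_le_norm_add_norm_sub' y (T y)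
  linarith

theorem tendsto_apply_of_mem_closure {ι F : Type*} [SeminormedAddCommGroup E]
    [NormedSpace 𝕜 E] [SeminormedAddCommGroup F] [NormedSpace 𝕜 F] {l : Filter ι}
    {T : ι → E →L[𝕜] F} {T₀ : E →L[𝕜] F} {C : ℝ} (hT : ∀ i, ‖T i‖ ≤ C)
    {S : Set E} (hS : ∀ v ∈ S, Tendsto (fun i => T i v) l (𝓝 (T₀ v))) {w : E}
    (hw : w ∈ closure S) : Tendsto (fun i => T i w) l (𝓝 (T₀ w)) := by
  have hequi : Equicontinuous fun i => ⇑(T i) := by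
    have h := (NormedSpace.equicontinuous_TFAE T).out 5 1
    exact h.1 ⟨C, hT⟩
  exact closure_minimal hS (hequi.isClosed_setOfPred_tendsto T₀.continuous) hw

variable [NormedAddCommGroup E] [NormedSpace 𝕜 E]

theorem eq_zero_of_apply_eq_self {T : E →L[𝕜] E} (hT : ‖T‖ < 1) {y : E} (hy : T y = y) :
    y = 0 := by
  have h := one_sub_mul_norm_le_norm_sub_apply (T := T) le_rfl y
  rw [hy, sub_self, norm_zero] at h
  exact norm_le_zero_iff.1 <| nonpos_of_mul_nonpos_right h (sub_pos.2 hT)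

theorem tsum_pow_apply_eq_apply_add [CompleteSpace E] {T : E →L[𝕜] E} (hT : ‖T‖ < 1) (τ : E) :
    ∑' n : ℕ, (T ^ n) τ = T (∑' n : ℕ, (T ^ n) τ) + τ := by
  have hsum : (∑' n : ℕ, T ^ n) τ = ∑' n : ℕ, (T ^ n) τ :=
    (apply 𝕜 E τ).map_tsum (summable_geometric_of_norm_lt_one hT)
  have hinv := congr($(mul_neg_geom_series T hT) τ)
  rw [sub_mul, one_mul, sub_apply, mul_apply_eq_comp, hsum, one_apply_eq_self] at hinv
  exact eq_add_of_sub_eq' hinv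

theorem tsum_pow_apply_mem_topologicalClosure {T : E →L[𝕜] E} {S : Submodule 𝕜 E}
    (hT : Set.MapsTo T S S) {τ : E} (hτ : τ ∈ S.topologicalClosure) :
    ∑' n : ℕ, (T ^ n) τ ∈ S.topologicalClosure := by
  have hTcl : Set.MapsTo T (closure S) (closure S) := hT.closure T.continuous
  refine tsum_mem S.isClosed_topologicalClosure fun n => ?_
  rw [FunLike.coe_pow_eq_iterate]
  exact hTcl.iterate n hτ

theorem tendsto_of_eq_apply_add {ι : Type*} {l : Filter ι} {T : ι → E →L[𝕜] E}
    {T₀ : E →L[𝕜] E} {c : ℝ} (hc : c < 1) (hT : ∀ᶠ i in l, ‖T i‖ ≤ c) {y s : ι → E}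
    {x τ : E} (hy : ∀ᶠ i in l, y i = T i (y i) + s i) (hs : Tendsto s l (𝓝 τ))
    (hx : x = T₀ x + τ) (hTx : Tendsto (fun i => T i x) l (𝓝 (T₀ x))) :
    Tendsto y l (𝓝 x) := by
  have hdefect : Tendsto (fun i => (T i x - T₀ x) + (s i - τ)) l (𝓝 0) := by
    simpa using (hTx.sub_const (T₀ x)).add (hs.sub_const τ)
  have hbound : ∀ᶠ i in l, ‖y i - x‖ ≤ (1 - c)⁻¹ * ‖(T i x - T₀ x) + (s i - τ)‖ := by
    filter_upwards [hT, hy] with i hTi hyi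
    have hdiff : y i - x - T i (y i - x) = (T i x - T₀ x) + (s i - τ) := by
      rw [map_sub, ← sub_eq_of_eq_add' hyi, ← sub_eq_of_eq_add' hx]
      abel
    rw [le_inv_mul_iff₀ (sub_pos.2 hc), ← hdiff]
    exact one_sub_mul_norm_le_norm_sub_apply hTi _
  refine tendsto_sub_nhds_zero_iff.1 (squeeze_zero_norm' hbound ?_)
  simpa using hdefect.norm.const_mul (1 - c)⁻¹

end ContinuousLinearMap

theorem abstract_linear_response_general
    {E : Type*} [NormedAddCommGroup E] [NormedSpace ℝ E] [CompleteSpace E]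
    (F : Submodule ℝ E) (J : Set ℝ) (α₀ : ℝ) (hα₀ : α₀ ∈ J)
    (hacc : (nhdsWithin α₀ (J \ {α₀})).NeBot)
    (lam : ℝ) (hlam1 : lam < 1)
    (K : ℝ → E →L[ℝ] E)
    (hKnorm : ∀ α ∈ J, ‖K α‖ ≤ lam)
    (hKF : ∀ α ∈ J, ∀ v ∈ F, K α v ∈ F)
    (hKcont : ∀ v ∈ F,
      Tendsto (fun α => K α v) (nhdsWithin α₀ J) (nhds (K α₀ v)))
    (r : ℝ → E) (hr0 : r α₀ = 0) (hrF : ∀ α ∈ J, r α ∈ F)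
    (τ₀ : E)
    (hτ : Tendsto (fun α => (α - α₀)⁻¹ • r α) (nhdsWithin α₀ (J \ {α₀})) (nhds τ₀))
    (δ : ℝ → E) (hδ : ∀ α ∈ J, δ α = K α (δ α) + r α) :
    δ α₀ = 0 ∧
      Tendsto (fun α => (α - α₀)⁻¹ • δ α) (nhdsWithin α₀ (J \ {α₀}))
        (nhds (∑' n : ℕ, ((K α₀) ^ n) τ₀)) := by
  have hK₀ : ‖K α₀‖ < 1 := (hKnorm α₀ hα₀).trans_lt hlam1
  refine ⟨(K α₀).eq_zero_of_apply_eq_self hK₀ (by simpa [hr0] using (hδ α₀ hα₀).symm), ?_⟩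
  have hτF : τ₀ ∈ F.topologicalClosure := mem_closure_of_tendsto hτ <|
    eventually_nhdsWithin_of_forall fun α hα => F.smul_mem _ (hrF α hα.1)
  set x := ∑' n : ℕ, (K α₀ ^ n) τ₀
  have hKx : Tendsto (fun α => K α x) (𝓝[J] α₀) (𝓝 (K α₀ x)) := by
    rw [tendsto_nhdsWithin_iff_subtype hα₀]
    refine ContinuousLinearMap.tendsto_apply_of_mem_closure (fun i : J => hKnorm i i.2)
      (fun v hv => (tendsto_nhdsWithin_iff_subtype hα₀ _ _).1 (hKcont v hv)) ?_
    exact (K α₀).tsum_pow_apply_mem_topologicalClosure (hKF α₀ hα₀) hτF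
  refine ContinuousLinearMap.tendsto_of_eq_apply_add hlam1
    (eventually_nhdsWithin_of_forall fun α hα => hKnorm α hα.1) ?_ hτ
    ((K α₀).tsum_pow_apply_eq_apply_add hK₀ τ₀)
    (hKx.mono_left (nhdsWithin_mono _ Set.sdiff_subset))
  filter_upwards [self_mem_nhdsWithin] with α hα
  rw [map_smul, ← smul_add, ← hδ α hα.1]

/-- Abstract linear response (Theorem B): given a family of bounded operators `K_α` on a
Banach space `E` with `‖K_α‖ ≤ λ < 1`, preserving a subspace `F`, strongly continuous at
`α₀` on `F`, a remainder `r(α) ∈ F` with `r(α₀) = 0` whose difference quotients converge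
to `τ₀`, and `δ` solving `δ(α) = K_α δ(α) + r(α)` on `J`, then `δ(α₀) = 0` and the
difference quotients `(α−α₀)⁻¹ δ(α)` converge to `(Id − K_{α₀})⁻¹ τ₀ = ∑ₙ K_{α₀}ⁿ τ₀`;
in particular `α ↦ δ(α)` is differentiable at `α₀` in `E`. -/
theorem abstract_linear_response
    {E : Type*} [NormedAddCommGroup E] [NormedSpace ℝ E] [CompleteSpace E]
    (F : Submodule ℝ E) (J : Set ℝ) (α₀ : ℝ) (hα₀ : α₀ ∈ J)
    (hacc : (nhdsWithin α₀ (J \ {α₀})).NeBot)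
    (lam : ℝ) (hlam0 : 0 ≤ lam) (hlam1 : lam < 1)
    (K : ℝ → E →L[ℝ] E)
    (hKnorm : ∀ α ∈ J, ‖K α‖ ≤ lam)
    (hKF : ∀ α ∈ J, ∀ v ∈ F, K α v ∈ F)
    (hKcont : ∀ v ∈ F,
      Tendsto (fun α => K α v) (nhdsWithin α₀ J) (nhds (K α₀ v)))
    (r : ℝ → E) (hr0 : r α₀ = 0) (hrF : ∀ α ∈ J, r α ∈ F)
    (τ₀ : E)
    (hτ : Tendsto (fun α => (α - α₀)⁻¹ • r α) (nhdsWithin α₀ (J \ {α₀})) (nhds τ₀))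
    (δ : ℝ → E) (hδ : ∀ α ∈ J, δ α = K α (δ α) + r α) :
    δ α₀ = 0 ∧
      Tendsto (fun α => (α - α₀)⁻¹ • δ α) (nhdsWithin α₀ (J \ {α₀}))
        (nhds (∑' n : ℕ, ((K α₀) ^ n) τ₀)) :=
  abstract_linear_response_general F J α₀ hα₀ hacc lam hlam1 K hKnorm hKF hKcont r hr0 hrF τ₀ hτ δ
    hδ
end

section
/- Let E and F be real normed vector spaces, let h : E → F and φ : F → ℝ be three times continuously differentiable, and let L₁, L₂, L₃, M₁, M₂, M₃ ≥ 0 be such that ‖D^j h(x)‖ ≤ L_j for all x ∈ E and ‖D^j φ(y)‖ ≤ M_j for all y ∈ F, for j = 1, 2, 3, where D^j denotes the j-th iterated Fréchet derivative. Then for every x ∈ E, ∑_{m=1}^{3} ‖D^m(φ ∘ h)(x)‖ ≤ max{ L₁ + L₂ + L₃, L₁² + 3·L₁·L₂, L₁³ } · (M₁ + M₂ + M₃). -/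
/-!
Since `D(g ∘ f) x = compL (Dg (f x)) (Df x)` and `compL` is a bilinear map of norm at most one,
the Leibniz rule bounds `‖D^(n+1) (g ∘ f) x‖` by `∑ i, (n choose i) ‖D^i (Dg ∘ f) x‖ ‖D^(n-i+1) f x‖`.
Applying the lower-order bounds to `Dg` in place of `g` gives the pointwise Faà di Bruno
inequalities for orders one to three, whose coefficients are the partial Bell polynomials
`B₁,₁ = L₁`, `B₂,₁ = L₂`, `B₂,₂ = L₁²`, `B₃,₁ = L₃`, `B₃,₂ = 3 L₁ L₂`, `B₃,₃ = L₁³`.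
Grouping their sum by the derivative of `φ` gives
`M₁ (L₁ + L₂ + L₃) + M₂ (L₁² + 3 L₁ L₂) + M₃ L₁³`.
-/

open ContinuousLinearMap

section

variable {𝕜 E F G : Type*} [NontriviallyNormedField 𝕜]
  [NormedAddCommGroup E] [NormedSpace 𝕜 E] [NormedAddCommGroup F] [NormedSpace 𝕜 F]
  [NormedAddCommGroup G] [NormedSpace 𝕜 G] {g : F → G} {f : E → F}

theorem fderiv_comp_eq_compL (hg : Differentiable 𝕜 g) (hf : Differentiable 𝕜 f) :
    fderiv 𝕜 (g ∘ f) = fun x => compL 𝕜 E F G (fderiv 𝕜 g (f x)) (fderiv 𝕜 f x) := by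
  funext x
  exact fderiv_comp x (hg (f x)) (hf x)

theorem norm_iteratedFDeriv_succ_comp_le {n : ℕ} (hg : ContDiff 𝕜 (n + 1) g)
    (hf : ContDiff 𝕜 (n + 1) f) (x : E) :
    ‖iteratedFDeriv 𝕜 (n + 1) (g ∘ f) x‖ ≤ ∑ i ∈ Finset.range (n + 1),
      (n.choose i : ℝ) * ‖iteratedFDeriv 𝕜 i (fderiv 𝕜 g ∘ f) x‖ *
        ‖iteratedFDeriv 𝕜 (n - i + 1) f x‖ := by
  have hg' : ContDiff 𝕜 n (fderiv 𝕜 g ∘ f) := (hg.fderiv_right le_rfl).comp (hf.of_le le_self_add)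
  rw [← norm_iteratedFDeriv_fderiv,
    fderiv_comp_eq_compL (hg.differentiable (by simp)) (hf.differentiable (by simp))]
  refine ((compL 𝕜 E F G).norm_iteratedFDeriv_le_of_bilinear_of_le_one hg'
    (hf.fderiv_right le_rfl) x le_rfl (norm_compL_le 𝕜 E F G)).trans_eq ?_
  simp only [norm_iteratedFDeriv_fderiv]

theorem norm_iteratedFDeriv_one_comp_le {x : E} (hg : DifferentiableAt 𝕜 g (f x))
    (hf : DifferentiableAt 𝕜 f x) :
    ‖iteratedFDeriv 𝕜 1 (g ∘ f) x‖ ≤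
      ‖iteratedFDeriv 𝕜 1 g (f x)‖ * ‖iteratedFDeriv 𝕜 1 f x‖ := by
  simpa only [norm_iteratedFDeriv_one, fderiv_comp x hg hf] using opNorm_comp_le _ _

theorem norm_iteratedFDeriv_two_comp_le (hg : ContDiff 𝕜 2 g) (hf : ContDiff 𝕜 2 f) (x : E) :
    ‖iteratedFDeriv 𝕜 2 (g ∘ f) x‖ ≤
      ‖iteratedFDeriv 𝕜 2 g (f x)‖ * ‖iteratedFDeriv 𝕜 1 f x‖ ^ 2 +
        ‖iteratedFDeriv 𝕜 1 g (f x)‖ * ‖iteratedFDeriv 𝕜 2 f x‖ := by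
  have hDg : ‖iteratedFDeriv 𝕜 1 (fderiv 𝕜 g ∘ f) x‖ ≤
      ‖iteratedFDeriv 𝕜 2 g (f x)‖ * ‖iteratedFDeriv 𝕜 1 f x‖ := by
    simpa only [norm_iteratedFDeriv_fderiv] using norm_iteratedFDeriv_one_comp_le
      ((hg.fderiv_right (by norm_num)).differentiable one_ne_zero (f x))
      (hf.differentiable two_ne_zero x)
  calc ‖iteratedFDeriv 𝕜 2 (g ∘ f) x‖
      ≤ ∑ i ∈ Finset.range 2, ((1).choose i : ℝ) * ‖iteratedFDeriv 𝕜 i (fderiv 𝕜 g ∘ f) x‖ *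
        ‖iteratedFDeriv 𝕜 (1 - i + 1) f x‖ := norm_iteratedFDeriv_succ_comp_le hg hf x
    _ = ‖iteratedFDeriv 𝕜 1 g (f x)‖ * ‖iteratedFDeriv 𝕜 2 f x‖ +
        ‖iteratedFDeriv 𝕜 1 (fderiv 𝕜 g ∘ f) x‖ * ‖iteratedFDeriv 𝕜 1 f x‖ := by
      simp [Finset.sum_range_succ]
    _ ≤ ‖iteratedFDeriv 𝕜 1 g (f x)‖ * ‖iteratedFDeriv 𝕜 2 f x‖ +
        ‖iteratedFDeriv 𝕜 2 g (f x)‖ * ‖iteratedFDeriv 𝕜 1 f x‖ * ‖iteratedFDeriv 𝕜 1 f x‖ := by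
      gcongr
    _ = _ := by ring

theorem norm_iteratedFDeriv_three_comp_le (hg : ContDiff 𝕜 3 g) (hf : ContDiff 𝕜 3 f) (x : E) :
    ‖iteratedFDeriv 𝕜 3 (g ∘ f) x‖ ≤
      ‖iteratedFDeriv 𝕜 3 g (f x)‖ * ‖iteratedFDeriv 𝕜 1 f x‖ ^ 3 +
        3 * ‖iteratedFDeriv 𝕜 2 g (f x)‖ * ‖iteratedFDeriv 𝕜 1 f x‖ * ‖iteratedFDeriv 𝕜 2 f x‖ +
        ‖iteratedFDeriv 𝕜 1 g (f x)‖ * ‖iteratedFDeriv 𝕜 3 f x‖ := by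
  have hg' : ContDiff 𝕜 2 (fderiv 𝕜 g) := hg.fderiv_right (by norm_num)
  have hD1g : ‖iteratedFDeriv 𝕜 1 (fderiv 𝕜 g ∘ f) x‖ ≤
      ‖iteratedFDeriv 𝕜 2 g (f x)‖ * ‖iteratedFDeriv 𝕜 1 f x‖ := by
    simpa only [norm_iteratedFDeriv_fderiv] using norm_iteratedFDeriv_one_comp_le
      (hg'.differentiable two_ne_zero (f x)) (hf.differentiable three_ne_zero x)
  have hD2g : ‖iteratedFDeriv 𝕜 2 (fderiv 𝕜 g ∘ f) x‖ ≤
      ‖iteratedFDeriv 𝕜 3 g (f x)‖ * ‖iteratedFDeriv 𝕜 1 f x‖ ^ 2 +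
        ‖iteratedFDeriv 𝕜 2 g (f x)‖ * ‖iteratedFDeriv 𝕜 2 f x‖ := by
    simpa only [norm_iteratedFDeriv_fderiv] using
      norm_iteratedFDeriv_two_comp_le hg' (hf.of_le (by norm_num)) x
  calc ‖iteratedFDeriv 𝕜 3 (g ∘ f) x‖
      ≤ ∑ i ∈ Finset.range 3, ((2).choose i : ℝ) * ‖iteratedFDeriv 𝕜 i (fderiv 𝕜 g ∘ f) x‖ *
        ‖iteratedFDeriv 𝕜 (2 - i + 1) f x‖ := norm_iteratedFDeriv_succ_comp_le hg hf x
    _ = ‖iteratedFDeriv 𝕜 1 g (f x)‖ * ‖iteratedFDeriv 𝕜 3 f x‖ +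
        2 * ‖iteratedFDeriv 𝕜 1 (fderiv 𝕜 g ∘ f) x‖ * ‖iteratedFDeriv 𝕜 2 f x‖ +
        ‖iteratedFDeriv 𝕜 2 (fderiv 𝕜 g ∘ f) x‖ * ‖iteratedFDeriv 𝕜 1 f x‖ := by
      simp [Finset.sum_range_succ]
    _ ≤ ‖iteratedFDeriv 𝕜 1 g (f x)‖ * ‖iteratedFDeriv 𝕜 3 f x‖ +
        2 * (‖iteratedFDeriv 𝕜 2 g (f x)‖ * ‖iteratedFDeriv 𝕜 1 f x‖) *
          ‖iteratedFDeriv 𝕜 2 f x‖ +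
        (‖iteratedFDeriv 𝕜 3 g (f x)‖ * ‖iteratedFDeriv 𝕜 1 f x‖ ^ 2 +
          ‖iteratedFDeriv 𝕜 2 g (f x)‖ * ‖iteratedFDeriv 𝕜 2 f x‖) * ‖iteratedFDeriv 𝕜 1 f x‖ := by
      gcongr
    _ = _ := by ring

end

theorem composition_C3_estimate_general
    {E F : Type*} [NormedAddCommGroup E] [NormedSpace ℝ E]
    [NormedAddCommGroup F] [NormedSpace ℝ F]
    (h : E → F) (φ : F → ℝ) (hh : ContDiff ℝ 3 h) (hφ : ContDiff ℝ 3 φ)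
    (L₁ L₂ L₃ M₁ M₂ M₃ : ℝ)
    (hL₁0 : 0 ≤ L₁)
    (hM₁0 : 0 ≤ M₁) (hM₂0 : 0 ≤ M₂) (hM₃0 : 0 ≤ M₃)
    (hL₁ : ∀ x, ‖iteratedFDeriv ℝ 1 h x‖ ≤ L₁)
    (hL₂ : ∀ x, ‖iteratedFDeriv ℝ 2 h x‖ ≤ L₂)
    (hL₃ : ∀ x, ‖iteratedFDeriv ℝ 3 h x‖ ≤ L₃)
    (hM₁ : ∀ y, ‖iteratedFDeriv ℝ 1 φ y‖ ≤ M₁)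
    (hM₂ : ∀ y, ‖iteratedFDeriv ℝ 2 φ y‖ ≤ M₂)
    (hM₃ : ∀ y, ‖iteratedFDeriv ℝ 3 φ y‖ ≤ M₃) :
    ∀ x : E,
      ‖iteratedFDeriv ℝ 1 (φ ∘ h) x‖ + ‖iteratedFDeriv ℝ 2 (φ ∘ h) x‖ +
          ‖iteratedFDeriv ℝ 3 (φ ∘ h) x‖
        ≤ max (L₁ + L₂ + L₃) (max (L₁ ^ 2 + 3 * L₁ * L₂) (L₁ ^ 3)) *
            (M₁ + M₂ + M₃) := by
  intro x
  set K := max (L₁ + L₂ + L₃) (max (L₁ ^ 2 + 3 * L₁ * L₂) (L₁ ^ 3))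
  have hD1 := norm_iteratedFDeriv_one_comp_le (hφ.differentiable (by norm_num) (h x))
    (hh.differentiable (by norm_num) x)
  have hD2 := norm_iteratedFDeriv_two_comp_le (hφ.of_le (by norm_num)) (hh.of_le (by norm_num)) x
  have hD3 := norm_iteratedFDeriv_three_comp_le hφ hh x
  grw [hD1, hD2, hD3, hM₁, hM₂, hM₃, hL₁, hL₂, hL₃]
  calc M₁ * L₁ + (M₂ * L₁ ^ 2 + M₁ * L₂) + (M₃ * L₁ ^ 3 + 3 * M₂ * L₁ * L₂ + M₁ * L₃)
      = M₁ * (L₁ + L₂ + L₃) + M₂ * (L₁ ^ 2 + 3 * L₁ * L₂) + M₃ * L₁ ^ 3 := by ring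
    _ ≤ M₁ * K + M₂ * K + M₃ * K := by
      gcongr
      exacts [le_max_left _ _, (le_max_left _ _).trans (le_max_right _ _),
        (le_max_right _ _).trans (le_max_right _ _)]
    _ = K * (M₁ + M₂ + M₃) := by ring

/-- The `C³` case of the push-forward norm estimate (via partial Bell polynomials): if
`h : E → F` and `φ : F → ℝ` are `C³` with `‖D^j h‖ ≤ L_j` and `‖D^j φ‖ ≤ M_j`
(`j = 1,2,3`), then for every `x ∈ E`,
`∑_{m=1}^{3} ‖D^m(φ∘h)(x)‖ ≤ max{L₁+L₂+L₃, L₁²+3L₁L₂, L₁³} · (M₁+M₂+M₃)`. -/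
theorem composition_C3_estimate
    {E F : Type*} [NormedAddCommGroup E] [NormedSpace ℝ E]
    [NormedAddCommGroup F] [NormedSpace ℝ F]
    (h : E → F) (φ : F → ℝ) (hh : ContDiff ℝ 3 h) (hφ : ContDiff ℝ 3 φ)
    (L₁ L₂ L₃ M₁ M₂ M₃ : ℝ)
    (hL₁0 : 0 ≤ L₁) (hL₂0 : 0 ≤ L₂) (hL₃0 : 0 ≤ L₃)
    (hM₁0 : 0 ≤ M₁) (hM₂0 : 0 ≤ M₂) (hM₃0 : 0 ≤ M₃)
    (hL₁ : ∀ x, ‖iteratedFDeriv ℝ 1 h x‖ ≤ L₁)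
    (hL₂ : ∀ x, ‖iteratedFDeriv ℝ 2 h x‖ ≤ L₂)
    (hL₃ : ∀ x, ‖iteratedFDeriv ℝ 3 h x‖ ≤ L₃)
    (hM₁ : ∀ y, ‖iteratedFDeriv ℝ 1 φ y‖ ≤ M₁)
    (hM₂ : ∀ y, ‖iteratedFDeriv ℝ 2 φ y‖ ≤ M₂)
    (hM₃ : ∀ y, ‖iteratedFDeriv ℝ 3 φ y‖ ≤ M₃) :
    ∀ x : E,
      ‖iteratedFDeriv ℝ 1 (φ ∘ h) x‖ + ‖iteratedFDeriv ℝ 2 (φ ∘ h) x‖ +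
          ‖iteratedFDeriv ℝ 3 (φ ∘ h) x‖
        ≤ max (L₁ + L₂ + L₃) (max (L₁ ^ 2 + 3 * L₁ * L₂) (L₁ ^ 3)) *
            (M₁ + M₂ + M₃) :=
  composition_C3_estimate_general h φ hh hφ L₁ L₂ L₃ M₁ M₂ M₃ hL₁0 hM₁0 hM₂0 hM₃0 hL₁ hL₂ hL₃ hM₁
    hM₂ hM₃
end

section
/- For every K ≥ 0 there exists C ≥ 0 with the following property. Let X ⊆ ℝ^d be a nonempty compact convex set with a base point x₀ ∈ X, let h₀, h₁ : ℝ^d → ℝ^d be C¹ maps with h₀(X) ⊆ X, h₁(X) ⊆ X and sup_{x∈X} ‖Dh_i(x)‖ ≤ K for i = 0,1, let μ⁺ and μ⁻ be finite Borel measures on X, and let φ : ℝ^d → ℝ be C². Then | (∫_X φ∘h₁ dμ⁺ − ∫_X φ∘h₁ dμ⁻) − (∫_X φ∘h₀ dμ⁺ − ∫_X φ∘h₀ dμ⁻) | ≤ C · N_Lip(μ⁺,μ⁻) · ( sup_{x∈X} ‖Dφ(x)‖ + sup_{x∈X} ‖D²φ(x)‖ ) · ( sup_{x∈X} ‖h₁(x)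 − h₀(x)‖ + sup_{x∈X} ‖Dh₁(x) − Dh₀(x)‖ ), where N_Lip(μ⁺,μ⁻) = sup { |∫_X ψ dμ⁺ − ∫_X ψ dμ⁻| : ψ : X → ℝ Lipschitz with |ψ(x₀)| + Lip(ψ) ≤ 1 } and Lip(ψ) denotes the Lipschitz constant of ψ. -/
open MeasureTheory

/-- The Lipschitz-dual distance between two finite Borel measures on `X` (with base
point `x₀`): `N_Lip(μ⁺,μ⁻) = sup { |∫_X ψ dμ⁺ − ∫_X ψ dμ⁻| : ψ Lipschitz on X with
|ψ(x₀)| + Lip(ψ) ≤ 1 }`. -/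
noncomputable def NLip {E : Type*} [NormedAddCommGroup E] [MeasurableSpace E]
    (X : Set E) (x₀ : E) (μp μm : Measure E) : ℝ :=
  ⨆ ψ : {ψ : E → ℝ // ∃ c : NNReal, LipschitzOnWith c ψ X ∧ |ψ x₀| + (c : ℝ) ≤ 1},
    |(∫ x in X, ψ.1 x ∂μp) - ∫ x in X, ψ.1 x ∂μm|

/-! The difference `ψ = φ ∘ h₁ - φ ∘ h₀` is itself a Lipschitz test function on `X`. By the mean
value inequality `|ψ x₀| ≤ sup ‖Dφ‖ · sup ‖h₁ - h₀‖`, and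
`Dψ = (Dφ ∘ h₁ - Dφ ∘ h₀) · Dh₁ + Dφ ∘ h₀ · (Dh₁ - Dh₀)`, whose first term is bounded by
`sup ‖D²φ‖ · sup ‖h₁ - h₀‖ · K`: this is where the second derivative of `φ` is needed.
Rescaling `ψ` into the unit ball of the norm `|ψ x₀| + Lip ψ` bounds `⟨ν, ψ⟩` by that norm
times `N_Lip(μ⁺, μ⁻)`. -/

lemma le_biSup_of_bddAbove_image {α β : Type*} [ConditionallyCompleteLattice α] {g : β → α}
    {X : Set β} (hg : BddAbove (g '' X)) {x : β} (hx : x ∈ X) : g x ≤ ⨆ y ∈ X, g y :=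
  le_ciSup₂ (f := fun y _ => g y)
    (hg.mono <| Set.iUnion_subset fun _ =>
      Set.range_subset_iff.2 fun hy => Set.mem_image_of_mem g hy) x hx

theorem ContinuousLinearMap.norm_comp_sub_comp_le {𝕜 E F G : Type*} [NontriviallyNormedField 𝕜]
    [NormedAddCommGroup E] [NormedSpace 𝕜 E] [NormedAddCommGroup F] [NormedSpace 𝕜 F]
    [NormedAddCommGroup G] [NormedSpace 𝕜 G] (A₀ A₁ : F →L[𝕜] G) (B₀ B₁ : E →L[𝕜] F) :
    ‖A₁.comp B₁ - A₀.comp B₀‖ ≤ ‖A₁ - A₀‖ * ‖B₁‖ + ‖A₀‖ * ‖B₁ - B₀‖ := by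
  have : A₁.comp B₁ - A₀.comp B₀ = (A₁ - A₀).comp B₁ + A₀.comp (B₁ - B₀) := by
    ext; simp
  rw [this]
  exact (norm_add_le _ _).trans (add_le_add (opNorm_comp_le _ _) (opNorm_comp_le _ _))

section NLip

variable {E : Type*} [NormedAddCommGroup E] [MeasurableSpace E] {X : Set E} {x₀ : E}
  {μp μm : Measure E} [IsFiniteMeasure μp] [IsFiniteMeasure μm]

lemma bddAbove_range_abs_setIntegral_sub (hX : Bornology.IsBounded X) (hx₀ : x₀ ∈ X) :
    BddAbove (Set.range fun ψ : {ψ : E → ℝ // ∃ c : NNReal, LipschitzOnWith c ψ X ∧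
      |ψ x₀| + (c : ℝ) ≤ 1} => |(∫ x in X, ψ.1 x ∂μp) - ∫ x in X, ψ.1 x ∂μm|) := by
  obtain ⟨R, hR⟩ := hX.subset_closedBall x₀
  refine ⟨(1 + |R|) * (μp X).toReal + (1 + |R|) * (μm X).toReal, ?_⟩
  rintro _ ⟨⟨ψ, c, hψ, hc⟩, rfl⟩
  have hbound : ∀ x ∈ X, ‖ψ x‖ ≤ 1 + |R| := fun x hx => by
    have hdist : dist (ψ x) (ψ x₀) ≤ c * dist x x₀ := hψ.dist_le_mul x hx x₀ hx₀
    have hdx : dist x x₀ ≤ |R| := (Metric.mem_closedBall.1 (hR hx)).trans (le_abs_self R)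
    have : (c : ℝ) * dist x x₀ ≤ 1 * |R| :=
      mul_le_mul (by linarith [abs_nonneg (ψ x₀)]) hdx dist_nonneg zero_le_one
    rw [Real.dist_eq] at hdist
    rw [Real.norm_eq_abs]
    linarith [abs_sub_abs_le_abs_sub (ψ x) (ψ x₀), abs_nonneg (ψ x₀), c.coe_nonneg]
  exact (abs_sub _ _).trans <| add_le_add
    (norm_setIntegral_le_of_norm_le_const (measure_lt_top μp X) hbound)
    (norm_setIntegral_le_of_norm_le_const (measure_lt_top μm X) hbound)

lemma abs_setIntegral_sub_le_NLip (hX : Bornology.IsBounded X) (hx₀ : x₀ ∈ X) {ψ : E → ℝ}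
    {c : NNReal} (hψ : LipschitzOnWith c ψ X) (hc : |ψ x₀| + (c : ℝ) ≤ 1) :
    |(∫ x in X, ψ x ∂μp) - ∫ x in X, ψ x ∂μm| ≤ NLip X x₀ μp μm :=
  le_ciSup (bddAbove_range_abs_setIntegral_sub hX hx₀) ⟨ψ, c, hψ, hc⟩

lemma NLip_nonneg (hX : Bornology.IsBounded X) (hx₀ : x₀ ∈ X) : 0 ≤ NLip X x₀ μp μm :=
  (abs_nonneg _).trans <| abs_setIntegral_sub_le_NLip (ψ := fun _ => 0) hX hx₀
    (LipschitzWith.const 0).lipschitzOnWith (by simp)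

lemma abs_setIntegral_sub_le_mul_NLip (hX : Bornology.IsBounded X) (hx₀ : x₀ ∈ X)
    {ψ : E → ℝ} {c : NNReal} (hψ : LipschitzOnWith c ψ X) :
    |(∫ x in X, ψ x ∂μp) - ∫ x in X, ψ x ∂μm| ≤ (|ψ x₀| + c) * NLip X x₀ μp μm := by
  rcases (add_nonneg (abs_nonneg (ψ x₀)) c.coe_nonneg).eq_or_lt with hzero | hpos
  · have hψ₀ : ψ x₀ = 0 := abs_eq_zero.1 (by linarith [c.coe_nonneg, abs_nonneg (ψ x₀)])
    have hc : c = 0 := by exact_mod_cast (by linarith [abs_nonneg (ψ x₀)] : (c : ℝ) = 0)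
    have hψX : ∀ x ∈ X, ψ x = 0 := fun x hx => by
      simpa [hc, hψ₀] using hψ.dist_le_mul x hx x₀ hx₀
    simp [setIntegral_eq_zero_of_forall_eq_zero hψX, hψ₀, hc]
  · have hscaled := abs_setIntegral_sub_le_NLip (μp := μp) (μm := μm) hX hx₀
      ((lipschitzWith_smul (|ψ x₀| + (c : ℝ))⁻¹).comp_lipschitzOnWith hψ) (by
        simp only [Function.comp_apply, smul_eq_mul, NNReal.coe_mul, coe_nnnorm,
          Real.norm_eq_abs, abs_mul, abs_inv, abs_of_pos hpos]
        rw [← mul_add, inv_mul_cancel₀ hpos.ne'])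
    simp only [Function.comp_apply, smul_eq_mul, integral_const_mul, ← mul_sub, abs_mul,
      abs_inv, abs_of_pos hpos] at hscaled
    rwa [inv_mul_le_iff₀ hpos] at hscaled

end NLip

lemma norm_comp_sub_comp_le {α F G : Type*} [NormedAddCommGroup F] [NormedSpace ℝ F]
    [NormedAddCommGroup G] [NormedSpace ℝ G] {X : Set α} {Y : Set F} {φ : F → G}
    {h₀ h₁ : α → F} {S₁ B₀ : ℝ} (hY : Convex ℝ Y) (hφ : Differentiable ℝ φ)
    (hm₀ : Set.MapsTo h₀ X Y) (hm₁ : Set.MapsTo h₁ X Y)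
    (hS₁ : ∀ y ∈ Y, ‖fderiv ℝ φ y‖ ≤ S₁) (hB₀ : ∀ x ∈ X, ‖h₁ x - h₀ x‖ ≤ B₀)
    {x : α} (hx : x ∈ X) : ‖φ (h₁ x) - φ (h₀ x)‖ ≤ S₁ * B₀ :=
  (hY.norm_image_sub_le_of_norm_fderiv_le (fun y _ => hφ y) hS₁ (hm₀ hx) (hm₁ hx)).trans <|
    mul_le_mul_of_nonneg_left (hB₀ x hx) ((norm_nonneg _).trans (hS₁ _ (hm₀ hx)))

section CompSub

variable {E F G : Type*} [NormedAddCommGroup E] [NormedSpace ℝ E] [NormedAddCommGroup F]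
  [NormedSpace ℝ F] [NormedAddCommGroup G] [NormedSpace ℝ G] {X : Set E} {Y : Set F}
  {φ : F → G} {h₀ h₁ : E → F} {S₁ S₂ K B₀ B₁ : ℝ}

lemma norm_fderiv_comp_sub_comp_le (hφ : Differentiable ℝ φ) (hh₀ : Differentiable ℝ h₀)
    (hh₁ : Differentiable ℝ h₁) (x : E) :
    ‖fderiv ℝ (fun x => φ (h₁ x) - φ (h₀ x)) x‖ ≤
      ‖fderiv ℝ φ (h₁ x) - fderiv ℝ φ (h₀ x)‖ * ‖fderiv ℝ h₁ x‖ +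
        ‖fderiv ℝ φ (h₀ x)‖ * ‖fderiv ℝ h₁ x - fderiv ℝ h₀ x‖ := by
  have hderiv : HasFDerivAt (fun x => φ (h₁ x) - φ (h₀ x))
      ((fderiv ℝ φ (h₁ x)).comp (fderiv ℝ h₁ x) - (fderiv ℝ φ (h₀ x)).comp (fderiv ℝ h₀ x)) x :=
    ((hφ _).hasFDerivAt.comp x (hh₁ x).hasFDerivAt).sub
      ((hφ _).hasFDerivAt.comp x (hh₀ x).hasFDerivAt)
  rw [hderiv.fderiv]
  exact ContinuousLinearMap.norm_comp_sub_comp_le _ _ _ _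

lemma Convex.lipschitzOnWith_comp_sub_comp (hX : Convex ℝ X) (hY : Convex ℝ Y)
    (hφ : Differentiable ℝ φ) (hDφ : Differentiable ℝ (fderiv ℝ φ))
    (hh₀ : Differentiable ℝ h₀) (hh₁ : Differentiable ℝ h₁)
    (hm₀ : Set.MapsTo h₀ X Y) (hm₁ : Set.MapsTo h₁ X Y)
    (hS₁ : ∀ y ∈ Y, ‖fderiv ℝ φ y‖ ≤ S₁) (hS₂ : ∀ y ∈ Y, ‖fderiv ℝ (fderiv ℝ φ) y‖ ≤ S₂)
    (hK : ∀ x ∈ X, ‖fderiv ℝ h₁ x‖ ≤ K) (hB₀ : ∀ x ∈ X, ‖h₁ x - h₀ x‖ ≤ B₀)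
    (hB₁ : ∀ x ∈ X, ‖fderiv ℝ h₁ x - fderiv ℝ h₀ x‖ ≤ B₁) :
    LipschitzOnWith (S₂ * B₀ * K + S₁ * B₁).toNNReal (fun x => φ (h₁ x) - φ (h₀ x)) X := by
  refine hX.lipschitzOnWith_of_nnnorm_fderiv_le
    (fun x _ => ((hφ _).comp x (hh₁ x)).sub ((hφ _).comp x (hh₀ x))) fun x hx => ?_
  rw [← NNReal.coe_le_coe, coe_nnnorm, Real.coe_toNNReal']
  refine le_max_of_le_left <| (norm_fderiv_comp_sub_comp_le hφ hh₀ hh₁ x).trans ?_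
  have hS₁₀ : 0 ≤ S₁ := (norm_nonneg _).trans (hS₁ _ (hm₀ hx))
  have hS₂B₀ : 0 ≤ S₂ * B₀ :=
    mul_nonneg ((hS₂ _ (hm₀ hx)).trans' (by positivity)) ((norm_nonneg _).trans (hB₀ x hx))
  gcongr
  · exact norm_comp_sub_comp_le hY hDφ hm₀ hm₁ hS₂ hB₀ hx
  · exact hK x hx
  · exact hS₁ _ (hm₀ hx)
  · exact hB₁ x hx

end CompSub

lemma abs_setIntegral_comp_sub_comp_le_mul_NLip {E : Type*} [NormedAddCommGroup E]
    [NormedSpace ℝ E] [MeasurableSpace E] [OpensMeasurableSpace E] {X : Set E} {x₀ : E}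
    {μp μm : Measure E}
    [IsFiniteMeasure μp] [IsFiniteMeasure μm] {φ : E → ℝ} {h₀ h₁ : E → E} {S₁ S₂ K B₀ B₁ : ℝ}
    (hX : IsCompact X) (hXc : Convex ℝ X) (hx₀ : x₀ ∈ X) (hK₀ : 0 ≤ K)
    (hφ : Differentiable ℝ φ) (hDφ : Differentiable ℝ (fderiv ℝ φ))
    (hh₀ : Differentiable ℝ h₀) (hh₁ : Differentiable ℝ h₁)
    (hm₀ : Set.MapsTo h₀ X X) (hm₁ : Set.MapsTo h₁ X X)
    (hS₁ : ∀ y ∈ X, ‖fderiv ℝ φ y‖ ≤ S₁) (hS₂ : ∀ y ∈ X, ‖fderiv ℝ (fderiv ℝ φ) y‖ ≤ S₂)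
    (hK : ∀ x ∈ X, ‖fderiv ℝ h₁ x‖ ≤ K) (hB₀ : ∀ x ∈ X, ‖h₁ x - h₀ x‖ ≤ B₀)
    (hB₁ : ∀ x ∈ X, ‖fderiv ℝ h₁ x - fderiv ℝ h₀ x‖ ≤ B₁) :
    |((∫ x in X, φ (h₁ x) ∂μp) - ∫ x in X, φ (h₁ x) ∂μm) -
        ((∫ x in X, φ (h₀ x) ∂μp) - ∫ x in X, φ (h₀ x) ∂μm)| ≤
      (K + 1) * NLip X x₀ μp μm * (S₁ + S₂) * (B₀ + B₁) := by
  have hS₁₀ : 0 ≤ S₁ := (hS₁ x₀ hx₀).trans' (by positivity)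
  have hS₂₀ : 0 ≤ S₂ := (hS₂ x₀ hx₀).trans' (by positivity)
  have hB₀₀ : 0 ≤ B₀ := (hB₀ x₀ hx₀).trans' (by positivity)
  have hB₁₀ : 0 ≤ B₁ := (hB₁ x₀ hx₀).trans' (by positivity)
  have hint (μ : Measure E) [IsFiniteMeasure μ] {h : E → E} (hh : Differentiable ℝ h) :
      IntegrableOn (fun x => φ (h x)) X μ :=
    (hφ.continuous.comp hh.continuous).continuousOn.integrableOn_compact hX
  have hψ := hXc.lipschitzOnWith_comp_sub_comp hXc hφ hDφ hh₀ hh₁ hm₀ hm₁ hS₁ hS₂ hK hB₀ hB₁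
  have hψ₀ := norm_comp_sub_comp_le hXc hφ hm₀ hm₁ hS₁ hB₀ hx₀
  calc _ = |(∫ x in X, (φ (h₁ x) - φ (h₀ x)) ∂μp) - ∫ x in X, (φ (h₁ x) - φ (h₀ x)) ∂μm| := by
        rw [integral_sub (hint μp hh₁) (hint μp hh₀), integral_sub (hint μm hh₁) (hint μm hh₀)]
        ring_nf
    _ ≤ (|φ (h₁ x₀) - φ (h₀ x₀)| + (S₂ * B₀ * K + S₁ * B₁).toNNReal) * NLip X x₀ μp μm :=
        abs_setIntegral_sub_le_mul_NLip hX.isBounded hx₀ hψ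
    _ ≤ (K + 1) * (S₁ + S₂) * (B₀ + B₁) * NLip X x₀ μp μm := by
        gcongr
        · exact NLip_nonneg hX.isBounded hx₀
        rw [Real.coe_toNNReal _ (by positivity), ← Real.norm_eq_abs]
        nlinarith [mul_nonneg hS₂₀ hB₀₀, mul_nonneg hS₂₀ hB₁₀,
          mul_nonneg hK₀ (mul_nonneg hS₁₀ hB₀₀), mul_nonneg hK₀ (mul_nonneg hS₁₀ hB₁₀),
          mul_nonneg hK₀ (mul_nonneg hS₂₀ hB₁₀)]
    _ = _ := by ring

/-- Lipschitz-dual continuity of the push-forward tested against `C²` observables: for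
every `K ≥ 0` there is `C ≥ 0` such that for all compact convex `X ⊆ ℝ^d` with base
point `x₀ ∈ X`, all `C¹` maps `h₀, h₁` preserving `X` with `sup_X ‖Dh_i‖ ≤ K`, all
finite Borel measures `μ⁺, μ⁻` on `X` and every `C²` function `φ`,
`|⟨(h₁)_*ν − (h₀)_*ν, φ⟩| ≤ C · N_Lip(μ⁺,μ⁻) · (sup_X ‖Dφ‖ + sup_X ‖D²φ‖) ·
(sup_X ‖h₁ − h₀‖ + sup_X ‖Dh₁ − Dh₀‖)` where `ν = μ⁺ − μ⁻`. -/
theorem pushforward_lipschitz_dual_continuity :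
    ∀ K : ℝ, 0 ≤ K → ∃ C : ℝ, 0 ≤ C ∧
      ∀ (d : ℕ) (X : Set (EuclideanSpace ℝ (Fin d))),
        IsCompact X → Convex ℝ X →
        ∀ x₀ ∈ X,
        ∀ h₀ h₁ : EuclideanSpace ℝ (Fin d) → EuclideanSpace ℝ (Fin d),
          ContDiff ℝ 1 h₀ → ContDiff ℝ 1 h₁ →
          Set.MapsTo h₀ X X → Set.MapsTo h₁ X X →
          (∀ x ∈ X, ‖fderiv ℝ h₀ x‖ ≤ K) → (∀ x ∈ X, ‖fderiv ℝ h₁ x‖ ≤ K) →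
          ∀ μp μm : Measure (EuclideanSpace ℝ (Fin d)),
            IsFiniteMeasure μp → IsFiniteMeasure μm → μp Xᶜ = 0 → μm Xᶜ = 0 →
            ∀ φ : EuclideanSpace ℝ (Fin d) → ℝ, ContDiff ℝ 2 φ →
              |((∫ x in X, φ (h₁ x) ∂μp) - ∫ x in X, φ (h₁ x) ∂μm) -
                  ((∫ x in X, φ (h₀ x) ∂μp) - ∫ x in X, φ (h₀ x) ∂μm)|
                ≤ C * NLip X x₀ μp μm *
                    ((⨆ x ∈ X, ‖fderiv ℝ φ x‖) +
                      ⨆ x ∈ X, ‖iteratedFDeriv ℝ 2 φ x‖) *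
                    ((⨆ x ∈ X, ‖h₁ x - h₀ x‖) +
                      ⨆ x ∈ X, ‖fderiv ℝ h₁ x - fderiv ℝ h₀ x‖) := by
  intro K hK
  refine ⟨K + 1, by linarith, ?_⟩
  intro d X hXc hXconv x₀ hx₀ h₀ h₁ hh₀ hh₁ hm₀ hm₁ _ hK₁ μp μm _ _ _ _ φ hφ
  have le_biSup_X {g : EuclideanSpace ℝ (Fin d) → ℝ} (hg : Continuous g) {x} (hx : x ∈ X) :
      g x ≤ ⨆ y ∈ X, g y :=
    le_biSup_of_bddAbove_image (hXc.bddAbove_image hg.continuousOn) hx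
  set S₁ := ⨆ x ∈ X, ‖fderiv ℝ φ x‖
  set S₂ := ⨆ x ∈ X, ‖iteratedFDeriv ℝ 2 φ x‖
  set B₀ := ⨆ x ∈ X, ‖h₁ x - h₀ x‖
  set B₁ := ⨆ x ∈ X, ‖fderiv ℝ h₁ x - fderiv ℝ h₀ x‖
  have hS₁ : ∀ x ∈ X, ‖fderiv ℝ φ x‖ ≤ S₁ := fun x =>
    le_biSup_X (hφ.continuous_fderiv two_ne_zero).norm
  have hS₂ : ∀ x ∈ X, ‖fderiv ℝ (fderiv ℝ φ) x‖ ≤ S₂ := fun x hx => by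
    rw [← norm_iteratedFDeriv_one, norm_iteratedFDeriv_fderiv]
    exact le_biSup_X (hφ.continuous_iteratedFDeriv le_rfl).norm hx
  have hB₀ : ∀ x ∈ X, ‖h₁ x - h₀ x‖ ≤ B₀ := fun x =>
    le_biSup_X (hh₁.continuous.sub hh₀.continuous).norm
  have hB₁ : ∀ x ∈ X, ‖fderiv ℝ h₁ x - fderiv ℝ h₀ x‖ ≤ B₁ := fun x =>
    le_biSup_X ((hh₁.continuous_fderiv one_ne_zero).sub (hh₀.continuous_fderiv one_ne_zero)).norm
  exact abs_setIntegral_comp_sub_comp_le_mul_NLip hXc hXconv hx₀ hK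
    (hφ.differentiable two_ne_zero) ((hφ.fderiv_right le_rfl).differentiable one_ne_zero)
    (hh₀.differentiable one_ne_zero) (hh₁.differentiable one_ne_zero) hm₀ hm₁ hS₁ hS₂ hK₁ hB₀ hB₁
end
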